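/- arXiv:0902.0286 — 5 statements merged into one kernel-verified Lean document; each statement's English description precedes it below -/
import Mathlib

section
/- Let u : [0,∞) → H be absolutely continuous into a Hilbert space H, and let h : [0,∞) → (0,∞) be continuous, decreasing, with h → 0 at infinity and √h integrable on (0,∞). If ∫_t^∞ ‖u_t(s)‖² ds ≤ h(t) for all t > 0, then ‖u(t) - u(τ)‖ ≤ ∫_{t-1}^∞ √(h(s)) ds for all 1 < t ≤ τ < ∞. -/
/-!
Cut `[t, τ]` into unit intervals `[t + i, t + i + 1]`. On each of them Cauchy–Schwarz bounds
`∫ ‖u'‖` by the square root of the energy tail `∫_{t+i}^∞ ‖u'‖²`, hence by `√(h (t + i))`; since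
`√h` is decreasing, `√(h (t + i)) ≤ ∫_{t+i-1}^{t+i} √h`, and these pieces tile `(t - 1, ∞)`.
-/

open MeasureTheory Filter Topology Set

theorem integral_le_sqrt_integral_sq {α : Type*} [MeasurableSpace α] {μ : Measure α}
    [IsProbabilityMeasure μ] {g : α → ℝ} (hg : MemLp g 2 μ) :
    ∫ x, g x ∂μ ≤ √(∫ x, g x ^ 2 ∂μ) := by
  have hvar := ProbabilityTheory.variance_nonneg g μ
  rw [ProbabilityTheory.variance_eq_sub hg, sub_nonneg] at hvar
  exact Real.le_sqrt_of_sq_le hvar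

theorem memLp_norm_two_of_integrable_norm_sq {α E : Type*} [MeasurableSpace α] {μ : Measure α}
    [NormedAddCommGroup E] {f : α → E} (hf : Integrable (fun x => ‖f x‖ ^ 2) μ) :
    MemLp (fun x => ‖f x‖) 2 μ := by
  refine (memLp_two_iff_integrable_sq ?_).2 hf
  exact (Real.continuous_sqrt.comp_aestronglyMeasurable hf.1).congr
    (.of_forall fun x => Real.sqrt_sq (norm_nonneg _))

section UnitIntervals

variable {g : ℝ → ℝ} {a : ℝ}

theorem intervalIntegrable_of_memLp_two_Ioi {b : ℝ} (hg : MemLp g 2 (volume.restrict (Ioi a)))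
    (hab : a ≤ b) : IntervalIntegrable g volume a b := by
  have hgab : MemLp g 2 (volume.restrict (Ioc a b)) :=
    hg.mono_measure (Measure.restrict_mono Ioc_subset_Ioi_self le_rfl)
  exact (intervalIntegrable_iff_integrableOn_Ioc_of_le hab).2 (hgab.integrable one_le_two)

theorem intervalIntegral_unit_le_sqrt_integral_sq_Ioi (hg : MemLp g 2 (volume.restrict (Ioi a))) :
    ∫ x in a..a + 1, g x ≤ √(∫ x in Ioi a, g x ^ 2) := by
  have : IsProbabilityMeasure (volume.restrict (Ioc a (a + 1))) := ⟨by simp [Real.volume_Ioc]⟩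
  rw [intervalIntegral.integral_of_le (by linarith)]
  calc ∫ x in Ioc a (a + 1), g x
      ≤ √(∫ x in Ioc a (a + 1), g x ^ 2) := integral_le_sqrt_integral_sq
        (hg.mono_measure (Measure.restrict_mono Ioc_subset_Ioi_self le_rfl))
    _ ≤ √(∫ x in Ioi a, g x ^ 2) := Real.sqrt_le_sqrt <|
        setIntegral_mono_set hg.integrable_sq (.of_forall fun _ => sq_nonneg _)
          Ioc_subset_Ioi_self.eventuallyLE

theorem intervalIntegral_le_sum_sqrt_integral_sq_Ioi (N : ℕ)
    (hg : ∀ i : ℕ, MemLp g 2 (volume.restrict (Ioi (a + i)))) :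
    ∫ x in a..a + N, g x ≤ ∑ i ∈ Finset.range N, √(∫ x in Ioi (a + i), g x ^ 2) := by
  have hsum := intervalIntegral.sum_integral_adjacent_intervals (a := fun i : ℕ => a + i) (n := N)
    fun i _ => intervalIntegrable_of_memLp_two_Ioi (hg i) (by push_cast; linarith)
  simp only [Nat.cast_zero, add_zero] at hsum
  rw [← hsum]
  refine Finset.sum_le_sum fun i _ => ?_
  simpa [add_assoc] using intervalIntegral_unit_le_sqrt_integral_sq_Ioi (hg i)

theorem sum_le_integral_Ioi_of_antitoneOn (hg : AntitoneOn g (Ici a)) (hg0 : ∀ x, 0 ≤ g x)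
    (hgi : IntegrableOn g (Ioi a)) (N : ℕ) :
    ∑ i ∈ Finset.range N, g (a + (i + 1 : ℕ)) ≤ ∫ x in Ioi a, g x :=
  calc ∑ i ∈ Finset.range N, g (a + (i + 1 : ℕ))
      ≤ ∫ x in a..a + N, g x := (hg.mono Icc_subset_Ici_self).sum_le_integral
    _ = ∫ x in Ioc a (a + N), g x := intervalIntegral.integral_of_le (by simp)
    _ ≤ ∫ x in Ioi a, g x :=
        setIntegral_mono_set hgi (.of_forall hg0) Ioc_subset_Ioi_self.eventuallyLE

end UnitIntervals

theorem norm_sub_le_integral_norm_of_hasDerivAt {E : Type*} [NormedAddCommGroup E]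
    [NormedSpace ℝ E] {u u' : ℝ → E} {a b : ℝ} (hab : a ≤ b)
    (hderiv : ∀ x ∈ Icc a b, HasDerivAt u (u' x) x)
    (hint : IntervalIntegrable (fun x => ‖u' x‖) volume a b) :
    ‖u b - u a‖ ≤ ∫ x in a..b, ‖u' x‖ :=
  norm_sub_le_integral_of_norm_deriv_le_of_le hab
    (fun x hx => (hderiv x hx).continuousAt.continuousWithinAt)
    (fun x hx => (hderiv x (Ioo_subset_Icc_self hx)).differentiableAt.differentiableWithinAt)
    (.of_forall fun x hx => (congrArg norm (hderiv x (Ioo_subset_Icc_self hx)).deriv).le) hint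

theorem stmt1_general {H : Type*} [NormedAddCommGroup H] [InnerProductSpace ℝ H]
    (u u' : ℝ → H) (h : ℝ → ℝ)
    (hderiv : ∀ t > (0:ℝ), HasDerivAt u (u' t) t)
    (hint : ∀ t > (0:ℝ), IntegrableOn (fun s => ‖u' s‖ ^ 2) (Set.Ioi t))
    (hdec : AntitoneOn h (Set.Ici 0))
    (hsqrt : IntegrableOn (fun s => Real.sqrt (h s)) (Set.Ioi 0))
    (htail : ∀ t > (0:ℝ), ∫ s in Set.Ioi t, ‖u' s‖ ^ 2 ≤ h t) :
    ∀ t τ : ℝ, 1 < t → t ≤ τ →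
      ‖u t - u τ‖ ≤ ∫ s in Set.Ioi (t - 1), Real.sqrt (h s) := by
  intro t τ ht htτ
  have hL2 : ∀ i : ℕ, MemLp (fun s => ‖u' s‖) 2 (volume.restrict (Ioi (t + i))) := fun i =>
    memLp_norm_two_of_integrable_norm_sq (hint (t + i) (by positivity))
  obtain ⟨N, hN⟩ : ∃ N : ℕ, τ ≤ t + N := ⟨⌈τ - t⌉₊, by linarith [Nat.le_ceil (τ - t)]⟩
  have hintN := intervalIntegrable_of_memLp_two_Ioi (by simpa using hL2 0) (htτ.trans hN)
  have hsqrt_dec : AntitoneOn (fun s => √(h s)) (Ici (t - 1)) :=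
    Real.sqrt_monotone.comp_antitoneOn (hdec.mono (Ici_subset_Ici.2 (by linarith)))
  calc ‖u t - u τ‖ = ‖u τ - u t‖ := norm_sub_rev _ _
    _ ≤ ∫ s in t..τ, ‖u' s‖ := norm_sub_le_integral_norm_of_hasDerivAt htτ
        (fun s hs => hderiv s (by linarith [hs.1]))
        (hintN.mono_set (uIcc_subset_uIcc_left (by simp [htτ, hN])))
    _ ≤ ∫ s in t..t + N, ‖u' s‖ := intervalIntegral.integral_mono_interval le_rfl htτ hN
        (.of_forall fun _ => norm_nonneg _) hintN
    _ ≤ ∑ i ∈ Finset.range N, √(∫ s in Ioi (t + i), ‖u' s‖ ^ 2) :=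
        intervalIntegral_le_sum_sqrt_integral_sq_Ioi N hL2
    _ ≤ ∑ i ∈ Finset.range N, √(h (t - 1 + (i + 1 : ℕ))) := Finset.sum_le_sum fun i _ => by
        rw [Nat.cast_succ, sub_add_add_cancel]
        exact Real.sqrt_le_sqrt (htail _ (by positivity))
    _ ≤ ∫ s in Ioi (t - 1), √(h s) := sum_le_integral_Ioi_of_antitoneOn hsqrt_dec
        (fun _ => Real.sqrt_nonneg _) (hsqrt.mono_set (Ioi_subset_Ioi (by linarith))) N

/-- Generalized Zelenyak lemma for slowly decaying energy tails. -/
theorem stmt1 {H : Type*} [NormedAddCommGroup H] [InnerProductSpace ℝ H]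
    (u u' : ℝ → H) (h : ℝ → ℝ)
    (hderiv : ∀ t > (0:ℝ), HasDerivAt u (u' t) t)
    (hint : ∀ t > (0:ℝ), IntegrableOn (fun s => ‖u' s‖ ^ 2) (Set.Ioi t))
    (hcont : Continuous h)
    (hpos : ∀ t ≥ (0:ℝ), 0 < h t)
    (hdec : AntitoneOn h (Set.Ici 0))
    (hlim : Tendsto h atTop (𝓝 0))
    (hsqrt : IntegrableOn (fun s => Real.sqrt (h s)) (Set.Ioi 0))
    (htail : ∀ t > (0:ℝ), ∫ s in Set.Ioi t, ‖u' s‖ ^ 2 ≤ h t) :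
    ∀ t τ : ℝ, 1 < t → t ≤ τ →
      ‖u t - u τ‖ ≤ ∫ s in Set.Ioi (t - 1), Real.sqrt (h s) :=
  stmt1_general u u' h hderiv hint hdec hsqrt htail
end

section
/- Let V : [T,∞) → ℝ and h : [T,∞) → (0,∞) be C¹ functions, B ∈ ℝ, C₇ > 0, with (d/dt)[B - V(t)] ≤ -C₇ [B - V(t)] + C₇ h(t), where h is positive, decreasing, and h'(t)/h(t) → 0 as t → ∞. Then for all sufficiently large t, B - V(t) ≤ 2 h(t). -/
/-!
Put `u = B - V - 2h`. Since `h'/h → 0`, eventually `h' ≥ -(C₇/4) h`, and the differential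
inequality becomes `u' + C₇ u ≤ -(C₇/2) h`. The same bound on `h'` makes `e^{C₇ t} h(t)`
nondecreasing, hence bounded below by some `K > 0`, so `(e^{C₇ t} u)' ≤ -(C₇/2) K`: the function
`e^{C₇ t} u(t)` decreases at least linearly and is eventually negative.
-/

open Filter Topology Set Real

section Monotonicity

variable {f f' : ℝ → ℝ} {a : ℝ}

theorem monotoneOn_Ici_of_hasDerivAt_nonneg (hf : ∀ t ≥ a, HasDerivAt f (f' t) t)
    (hf' : ∀ t ≥ a, 0 ≤ f' t) : MonotoneOn f (Ici a) :=
  monotoneOn_of_hasDerivWithinAt_nonneg (convex_Ici a)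
    (fun t ht ↦ (hf t ht).continuousAt.continuousWithinAt)
    (fun t ht ↦ (hf t (interior_subset ht)).hasDerivWithinAt)
    (fun t ht ↦ hf' t (interior_subset ht))

theorem antitoneOn_Ici_of_hasDerivAt_nonpos (hf : ∀ t ≥ a, HasDerivAt f (f' t) t)
    (hf' : ∀ t ≥ a, f' t ≤ 0) : AntitoneOn f (Ici a) :=
  antitoneOn_of_hasDerivWithinAt_nonpos (convex_Ici a)
    (fun t ht ↦ (hf t ht).continuousAt.continuousWithinAt)
    (fun t ht ↦ (hf t (interior_subset ht)).hasDerivWithinAt)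
    (fun t ht ↦ hf' t (interior_subset ht))

theorem tendsto_atBot_of_hasDerivAt_le_neg {c : ℝ} (hc : 0 < c)
    (hf : ∀ t ≥ a, HasDerivAt f (f' t) t) (hf' : ∀ t ≥ a, f' t ≤ -c) :
    Tendsto f atTop atBot := by
  have hanti : AntitoneOn (fun t ↦ f t + c * t) (Ici a) :=
    antitoneOn_Ici_of_hasDerivAt_nonpos (fun t ht ↦ (hf t ht).add ((hasDerivAt_id t).const_mul c))
      (fun t ht ↦ by linarith [hf' t ht])
  have hlin : Tendsto (fun t ↦ f a + c * a - c * t) atTop atBot :=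
    tendsto_atBot_add_const_left _ _ (tendsto_neg_atTop_atBot.comp (tendsto_id.const_mul_atTop hc))
  refine tendsto_atBot_mono' _ ?_ hlin
  filter_upwards [eventually_ge_atTop a] with t ht
  linarith [hanti self_mem_Ici ht ht]

end Monotonicity

theorem hasDerivAt_exp_mul_mul {f : ℝ → ℝ} {f' c t : ℝ} (hf : HasDerivAt f f' t) :
    HasDerivAt (fun x ↦ exp (c * x) * f x) (exp (c * t) * (c * f t + f')) t := by
  have hexp : HasDerivAt (fun x ↦ exp (c * x)) (exp (c * t) * c) t := by
    simpa using ((hasDerivAt_id t).const_mul c).exp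
  exact (hexp.mul hf).congr_deriv (by ring)

theorem monotoneOn_exp_mul_mul_of_neg_mul_le {f f' : ℝ → ℝ} {a c : ℝ}
    (hf : ∀ t ≥ a, HasDerivAt f (f' t) t) (hf' : ∀ t ≥ a, -c * f t ≤ f' t) :
    MonotoneOn (fun t ↦ exp (c * t) * f t) (Ici a) :=
  monotoneOn_Ici_of_hasDerivAt_nonneg (fun t ht ↦ hasDerivAt_exp_mul_mul (hf t ht))
    (fun t ht ↦ mul_nonneg (exp_pos _).le (by linarith [hf' t ht]))

theorem eventually_neg_mul_le_of_tendsto_div_zero {α : Type*} {l : Filter α} {f g : α → ℝ}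
    (hpos : ∀ᶠ t in l, 0 < f t) (hratio : Tendsto (fun t ↦ g t / f t) l (𝓝 0))
    {ε : ℝ} (hε : 0 < ε) : ∀ᶠ t in l, -ε * f t ≤ g t := by
  filter_upwards [hpos, hratio.eventually (lt_mem_nhds (neg_lt_zero.2 hε))] with t ht hlt
  exact ((lt_div_iff₀ ht).1 hlt).le

theorem stmt4_general (V V' h h' : ℝ → ℝ) (B T C₇ : ℝ) (hC₇ : 0 < C₇)
    (hV : ∀ t ≥ T, HasDerivAt V (V' t) t)
    (hh : ∀ t ≥ T, HasDerivAt h (h' t) t)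
    (hpos : ∀ t ≥ T, 0 < h t)
    (hratio : Tendsto (fun t => h' t / h t) atTop (𝓝 0))
    (hineq : ∀ t ≥ T, -V' t ≤ -C₇ * (B - V t) + C₇ * h t) :
    ∀ᶠ t in atTop, B - V t ≤ 2 * h t := by
  have hpos_ev : ∀ᶠ t in atTop, 0 < h t := eventually_atTop.2 ⟨T, hpos⟩
  obtain ⟨T₁, hT₁⟩ := eventually_atTop.1 ((eventually_ge_atTop T).and
    (eventually_neg_mul_le_of_tendsto_div_zero hpos_ev hratio (div_pos hC₇ four_pos)))
  have hgrowth : MonotoneOn (fun t ↦ exp (C₇ * t) * h t) (Ici T₁) :=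
    monotoneOn_exp_mul_mul_of_neg_mul_le (fun t ht ↦ hh t (hT₁ t ht).1)
      (fun t ht ↦ by nlinarith [(hT₁ t ht).2, hpos t (hT₁ t ht).1])
  set K := exp (C₇ * T₁) * h T₁
  have hK : 0 < K := mul_pos (exp_pos _) (hpos T₁ (hT₁ T₁ le_rfl).1)
  have hgap : ∀ t ≥ T₁, HasDerivAt (fun x ↦ B - V x - 2 * h x) (-V' t - 2 * h' t) t := fun t ht ↦ by
    exact ((hV t (hT₁ t ht).1).const_sub B).sub ((hh t (hT₁ t ht).1).const_mul 2)
  have hdecay : Tendsto (fun t ↦ exp (C₇ * t) * (B - V t - 2 * h t)) atTop atBot := by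
    refine tendsto_atBot_of_hasDerivAt_le_neg (by positivity : 0 < C₇ / 2 * K)
      (fun t ht ↦ hasDerivAt_exp_mul_mul (hgap t ht)) (fun t ht ↦ ?_)
    obtain ⟨hTt, hh't⟩ := hT₁ t ht
    have hKt : K ≤ exp (C₇ * t) * h t := hgrowth self_mem_Ici ht ht
    have hrate : C₇ * (B - V t - 2 * h t) + (-V' t - 2 * h' t) ≤ -(C₇ / 2) * h t := by
      linarith [hineq t hTt]
    nlinarith [mul_le_mul_of_nonneg_left hrate (exp_pos (C₇ * t)).le]
  filter_upwards [hdecay.eventually_lt_atBot 0] with t ht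
  linarith [neg_of_mul_neg_right ht (exp_pos (C₇ * t)).le]

/-- The energy gap is eventually dominated by twice the perturbation amplitude. -/
theorem stmt4 (V V' h h' : ℝ → ℝ) (B T C₇ : ℝ) (hC₇ : 0 < C₇)
    (hV : ∀ t ≥ T, HasDerivAt V (V' t) t)
    (hh : ∀ t ≥ T, HasDerivAt h (h' t) t)
    (hpos : ∀ t ≥ T, 0 < h t)
    (hdec : ∀ t ≥ T, h' t < 0)
    (hratio : Tendsto (fun t => h' t / h t) atTop (𝓝 0))
    (hineq : ∀ t ≥ T, -V' t ≤ -C₇ * (B - V t) + C₇ * h t) :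
    ∀ᶠ t in atTop, B - V t ≤ 2 * h t :=
  stmt4_general V V' h h' B T C₇ hC₇ hV hh hpos hratio hineq
end

section
/- Define V(u) = (1/2) e^{-1/u²} for u ≠ 0 and V(0) = 0, so that V'(u) = u^{-3} e^{-1/u²} for u ≠ 0. Then with the modulus ω̃(s) = 2|s| |ln(2s)|^{3/2} (for 0 < s < 1/2), the generalized gradient inequality ω̃(V(u)) ≤ |V'(u)| holds for all u sufficiently close to 0, u ≠ 0. -/
open Real

/-! The inequality is in fact an identity, valid for every `u` (at `u = 0` through `0⁻¹ = 0`):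
with `t = u⁻¹` one has `log (2 V(u)) = -t²` and `(t²)^{3/2} = |t|³`, so
`2 V(u) |log (2 V(u))|^{3/2} = |t|³ e^{-t²} = |V'(u)|`. -/

lemma sq_rpow_three_halves (x : ℝ) : (x ^ 2) ^ ((3 : ℝ) / 2) = |x| ^ 3 := by
  rw [← sq_abs, ← rpow_natCast |x| 2, ← rpow_mul (abs_nonneg x), ← rpow_natCast |x| 3]
  norm_num

lemma abs_log_exp_neg_one_div_sq (u : ℝ) : |log (exp (-1 / u ^ 2))| = u⁻¹ ^ 2 := by
  rw [log_exp, neg_div, abs_neg, one_div, ← inv_pow, abs_of_nonneg (sq_nonneg _)]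

theorem modulus_exp_neg_inv_sq_eq (u : ℝ) :
    2 * |(1 / 2 : ℝ) * exp (-1 / u ^ 2)| *
        |log (2 * ((1 / 2 : ℝ) * exp (-1 / u ^ 2)))| ^ ((3 : ℝ) / 2)
      = |(u ^ 3)⁻¹ * exp (-1 / u ^ 2)| := by
  have h2V : 2 * ((1 / 2 : ℝ) * exp (-1 / u ^ 2)) = exp (-1 / u ^ 2) := by ring
  rw [h2V, abs_log_exp_neg_one_div_sq, sq_rpow_three_halves, abs_mul, abs_mul,
    abs_of_pos (exp_pos _), abs_of_pos (one_half_pos : (0 : ℝ) < 1 / 2), ← inv_pow, abs_pow]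
  ring

/-- The generalized gradient inequality with the modulus
`ω̃(s) = 2|s| |ln(2s)|^{3/2}` holds for `V(u) = (1/2) e^{-1/u²}` near `u = 0`. -/
theorem stmt6 :
    ∃ δ > (0:ℝ), ∀ u : ℝ, u ≠ 0 → |u| < δ →
      2 * |(1 / 2 : ℝ) * Real.exp (-1 / u ^ 2)| *
          |Real.log (2 * ((1 / 2 : ℝ) * Real.exp (-1 / u ^ 2)))| ^ ((3 : ℝ) / 2)
        ≤ |(u ^ 3)⁻¹ * Real.exp (-1 / u ^ 2)| :=
  ⟨1, one_pos, fun u _ _ => (modulus_exp_neg_inv_sq_eq u).le⟩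
end

section
/- With the explicit coefficient formula aₖ(t) = aₖ(0)e^{(λ_l−λₖ)t}/√(1 + 2a_l(0)²t + Σ_{λₘ≠λ_l}(λ_l−λₘ)^{-1}(e^{2(λ_l−λₘ)t}−1)aₘ(0)²), if the smallest index j with a_j(0) ≠ 0 satisfies λ_j = λ_l, then |a(t)|² = O(1/t) as t → ∞; more precisely |a(t)|² ≤ C/t for some C > 0 and all large t. -/
/-!
Since the first nonzero mode lies in the eigenspace of `λ_l` and `λ` is increasing, every mode
present has `λₖ ≥ λ_l`, so each numerator factor `e^{(λ_l-λₖ)t}` is at most `1`. Every term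
`x⁻¹(e^{2xt} - 1)` of the second sum in the denominator is nonnegative for `t ≥ 0`, whatever the
sign of `x`, so the denominator is at least `2 a_l(0)² t`. Hence
`|a(t)|² ≤ |a(0)|² / (2 a_l(0)² t)`.
-/

open Filter Real

lemma inv_mul_exp_sub_one_nonneg {c x t : ℝ} (hc : 0 ≤ c) (ht : 0 ≤ t) :
    0 ≤ x⁻¹ * (exp (c * x * t) - 1) := by
  rcases le_total x 0 with hx | hx
  · refine mul_nonneg_of_nonpos_of_nonpos (inv_nonpos.2 hx) (sub_nonpos.2 (exp_le_one_iff.2 ?_))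
    exact mul_nonpos_of_nonpos_of_nonneg (mul_nonpos_of_nonneg_of_nonpos hc hx) ht
  · exact mul_nonneg (inv_nonneg.2 hx) (sub_nonneg.2 (one_le_exp (by positivity)))

lemma sq_mul_exp_le_sq {c x t : ℝ} (hx : c ≠ 0 → x ≤ 0) (ht : 0 ≤ t) :
    (c * exp (x * t)) ^ 2 ≤ c ^ 2 := by
  rcases eq_or_ne c 0 with rfl | hc
  · simp
  have hexp : exp (x * t) ≤ 1 := exp_le_one_iff.2 (mul_nonpos_of_nonpos_of_nonneg (hx hc) ht)
  rw [mul_pow]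
  exact mul_le_of_le_one_right (sq_nonneg c) (pow_le_one₀ (exp_nonneg _) hexp)

lemma Monotone.le_of_ne_zero_of_forall_lt_eq_zero {α β : Type*} [Preorder α] [Zero β] {f : ℕ → α}
    {g : ℕ → β} {j k : ℕ} (hf : Monotone f) (hg : ∀ i < j, g i = 0) (hk : g k ≠ 0) :
    f j ≤ f k :=
  hf (not_lt.1 fun hkj => hk (hg k hkj))

lemma tsum_sq_div_sqrt_le {ι : Type*} {b c : ι → ℝ} {D : ℝ} (hD : 0 < D)
    (hb : Summable fun k => b k ^ 2) (hcb : ∀ k, c k ^ 2 ≤ b k ^ 2) :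
    ∑' k, (c k / √D) ^ 2 ≤ (∑' k, b k ^ 2) / D := by
  have hterm : ∀ k, (c k / √D) ^ 2 ≤ b k ^ 2 / D := fun k => by
    rw [div_pow, sq_sqrt hD.le]
    exact div_le_div_of_nonneg_right (hcb k) hD.le
  rw [← tsum_div_const]
  exact (Summable.of_nonneg_of_le (fun _ => sq_nonneg _) hterm (hb.div_const D)).tsum_le_tsum
    hterm (hb.div_const D)

/-- Case (ii): if the lowest excited mode has eigenvalue `λ_l`, then
`|a(t)|² = O(1/t)` as `t → ∞`. -/
theorem stmt11 (lam : ℕ → ℝ) (l j : ℕ) (a0 : ℕ → ℝ)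
    (hfin : (Function.support a0).Finite)
    (hmono : Monotone lam)
    (hmin : ∀ k < j, a0 k = 0)
    (hj : a0 j ≠ 0)
    (heq : lam j = lam l)
    (a : ℕ → ℝ → ℝ)
    (ha : ∀ k t, a k t = a0 k * Real.exp ((lam l - lam k) * t) /
      Real.sqrt (1 + 2 * (∑' i : {i // lam i = lam l}, (a0 i.1) ^ 2) * t +
        ∑' m : {m // lam m ≠ lam l},
          (lam l - lam m.1)⁻¹ * (Real.exp (2 * (lam l - lam m.1) * t) - 1) * (a0 m.1) ^ 2)) :
    ∃ C > (0:ℝ), ∀ᶠ t in atTop, (∑' k, (a k t) ^ 2) ≤ C / t := by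
  have hsq : Summable fun k => a0 k ^ 2 :=
    summable_of_hasFiniteSupport <| hfin.subset fun k hk => by simp_all
  set A := ∑' i : {i // lam i = lam l}, a0 i.1 ^ 2
  have hA : 0 < A :=
    (hsq.subtype _).tsum_pos (fun _ => sq_nonneg _) ⟨j, heq⟩ (sq_pos_of_ne_zero hj)
  have hB : 0 < ∑' k, a0 k ^ 2 := hsq.tsum_pos (fun _ => sq_nonneg _) j (sq_pos_of_ne_zero hj)
  refine ⟨(∑' k, a0 k ^ 2) / (2 * A), by positivity, ?_⟩
  filter_upwards [eventually_gt_atTop 0] with t ht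
  have hS : 0 ≤ ∑' m : {m // lam m ≠ lam l},
      (lam l - lam m.1)⁻¹ * (exp (2 * (lam l - lam m.1) * t) - 1) * a0 m.1 ^ 2 :=
    tsum_nonneg fun m => mul_nonneg (inv_mul_exp_sub_one_nonneg zero_le_two ht.le) (sq_nonneg _)
  have hmode : ∀ k, (a0 k * exp ((lam l - lam k) * t)) ^ 2 ≤ a0 k ^ 2 := fun k =>
    sq_mul_exp_le_sq (fun hk => by
      linarith [heq ▸ hmono.le_of_ne_zero_of_forall_lt_eq_zero hmin hk]) ht.le
  simp_rw [ha]
  calc _ ≤ (∑' k, a0 k ^ 2) / (1 + 2 * A * t + _) := tsum_sq_div_sqrt_le (by positivity) hsq hmode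
    _ ≤ (∑' k, a0 k ^ 2) / (2 * A * t) :=
      div_le_div_of_nonneg_left hB.le (by positivity) (by linarith)
    _ = _ := by rw [div_div]
end

section
/- In the setting of the non-local equation, let ψ̂ = Σᵢ₌₁^{k+1} ĉᵢ ψ_{j,i} with Σ ĉᵢ² = λ_l − λ_j be an equilibrium, and let V''(ψ̂)v = Δv + λ_l v − 2ψ̂⟨ψ̂, v⟩ − (∫ψ̂²)v be the linearization. Then for v = Σᵢ bᵢ ψ_{j,i} in the eigenspace of λ_j, one has V''(ψ̂)v = 0 if and only if Σᵢ bᵢ ĉᵢ = 0; hence the kernel of V''(ψ̂) restricted to this eigenspace is exactly k-dimensional. -/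
open RealInnerProductSpace

/-!
On the `λ_j`-eigenspace, `Δ + λ_l - ‖ψ̂‖²` vanishes because `‖ψ̂‖² = Σ ĉᵢ² = λ_l - λ_j`, so
`V''(ψ̂) v = -2⟪ψ̂, v⟫ ψ̂`. As `ψ̂ ≠ 0`, this vanishes iff `⟪ψ̂, v⟫ = Σ bᵢ ĉᵢ = 0` by
orthonormality, and the kernel of the nonzero functional `b ↦ Σ bᵢ ĉᵢ` on `ℝ^(k+1)` has dimension `k`.
-/

lemma Module.End.apply_sum_smul_of_forall_apply_eq_smul {R M ι : Type*} [CommRing R]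
    [AddCommGroup M] [Module R M] {f : Module.End R M} {μ : R} {ψ : ι → M}
    (hψ : ∀ i, f (ψ i) = μ • ψ i) (s : Finset ι) (b : ι → R) :
    f (∑ i ∈ s, b i • ψ i) = μ • ∑ i ∈ s, b i • ψ i :=
  Module.End.mem_eigenspace_iff.mp <| Submodule.sum_mem _ fun i _ =>
    Submodule.smul_mem _ _ (Module.End.mem_eigenspace_iff.mpr (hψ i))

lemma linearization_apply_eq_zero_iff {H : Type*} [NormedAddCommGroup H]
    [InnerProductSpace ℝ H] {Δ : H →ₗ[ℝ] H} {laml lamj : ℝ} {ψhat v : H}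
    (hv : Δ v = (-lamj) • v) (hnorm : ‖ψhat‖ ^ 2 = laml - lamj) (hψhat : ψhat ≠ 0) :
    Δ v + laml • v - (2 * ⟪ψhat, v⟫) • ψhat - ‖ψhat‖ ^ 2 • v = 0 ↔ ⟪ψhat, v⟫ = 0 := by
  have hreduce : Δ v + laml • v - (2 * ⟪ψhat, v⟫) • ψhat - ‖ψhat‖ ^ 2 • v
      = -((2 * ⟪ψhat, v⟫) • ψhat) := by
    rw [hv, hnorm]
    module
  rw [hreduce, neg_eq_zero, smul_eq_zero, or_iff_left hψhat, mul_eq_zero,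
    or_iff_right two_ne_zero]

lemma finrank_ker_sum_smul_proj_add_one {K ι : Type*} [Field K] [Fintype ι] {c : ι → K}
    (hc : c ≠ 0) :
    Module.finrank K (LinearMap.ker (∑ i, c i • (LinearMap.proj i : (ι → K) →ₗ[K] K))) + 1
      = Fintype.card ι := by
  classical
  obtain ⟨i, hi⟩ := Function.ne_iff.mp hc
  have hf : (∑ i, c i • (LinearMap.proj i : (ι → K) →ₗ[K] K)) ≠ 0 := fun h => hi <| by
    simpa [Pi.single_apply] using LinearMap.congr_fun h (Pi.single i 1)
  rw [Module.Dual.finrank_ker_add_one_of_ne_zero hf, Module.finrank_fintype_fun_eq_card]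

theorem stmt14_general {H : Type*} [NormedAddCommGroup H] [InnerProductSpace ℝ H]
    (Δ : H →ₗ[ℝ] H) (k : ℕ)
    (laml lamj : ℝ) (hlam : lamj < laml)
    (ψ : Fin (k + 1) → H) (hON : Orthonormal ℝ ψ)
    (hΔ : ∀ i, Δ (ψ i) = (-lamj) • ψ i)
    (c : Fin (k + 1) → ℝ) (hsum : (∑ i, (c i) ^ 2) = laml - lamj)
    (ψhat : H) (hψhat : ψhat = ∑ i, c i • ψ i) :
    (∀ b : Fin (k + 1) → ℝ, ∀ v : H, v = ∑ i, b i • ψ i →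
      (Δ v + laml • v - (2 * inner ℝ ψhat v : ℝ) • ψhat - ‖ψhat‖ ^ 2 • v = 0 ↔
        (∑ i, b i * c i) = 0)) ∧
    Module.finrank ℝ
      (LinearMap.ker (∑ i, c i • (LinearMap.proj i : (Fin (k + 1) → ℝ) →ₗ[ℝ] ℝ))) = k := by
  have hnorm : ‖ψhat‖ ^ 2 = laml - lamj := by
    rw [← real_inner_self_eq_norm_sq, hψhat, hON.inner_sum]
    simpa [sq] using hsum
  refine ⟨fun b v hv => ?_, ?_⟩
  · have hψhat_ne : ψhat ≠ 0 := by
      rintro rfl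
      simp only [norm_zero, ne_eq, OfNat.ofNat_ne_zero, not_false_eq_true, zero_pow] at hnorm
      linarith
    have hΔv : Δ v = (-lamj) • v := hv ▸ Module.End.apply_sum_smul_of_forall_apply_eq_smul hΔ _ b
    rw [linearization_apply_eq_zero_iff hΔv hnorm hψhat_ne, hψhat, hv, hON.inner_sum]
    simp [mul_comm]
  · have hc : c ≠ 0 := by
      rintro rfl
      simp only [Pi.zero_apply, ne_eq, OfNat.ofNat_ne_zero, not_false_eq_true, zero_pow,
        Finset.sum_const_zero] at hsum
      linarith
    simpa using finrank_ker_sum_smul_proj_add_one hc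

/-- The kernel of the linearization `V''(ψ̂)` restricted to the eigenspace of
`λ_j` is given by `Σ bᵢ ĉᵢ = 0`, hence is exactly `k`-dimensional. -/
theorem stmt14 {H : Type*} [NormedAddCommGroup H] [InnerProductSpace ℝ H]
    (Δ : H →ₗ[ℝ] H) (k : ℕ) (hk : 1 ≤ k)
    (laml lamj : ℝ) (hlam : lamj < laml)
    (ψ : Fin (k + 1) → H) (hON : Orthonormal ℝ ψ)
    (hΔ : ∀ i, Δ (ψ i) = (-lamj) • ψ i)
    (c : Fin (k + 1) → ℝ) (hsum : (∑ i, (c i) ^ 2) = laml - lamj)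
    (ψhat : H) (hψhat : ψhat = ∑ i, c i • ψ i) :
    (∀ b : Fin (k + 1) → ℝ, ∀ v : H, v = ∑ i, b i • ψ i →
      (Δ v + laml • v - (2 * inner ℝ ψhat v : ℝ) • ψhat - ‖ψhat‖ ^ 2 • v = 0 ↔
        (∑ i, b i * c i) = 0)) ∧
    Module.finrank ℝ
      (LinearMap.ker (∑ i, c i • (LinearMap.proj i : (Fin (k + 1) → ℝ) →ₗ[ℝ] ℝ))) = k :=
  stmt14_general Δ k laml lamj hlam ψ hON hΔ c hsum ψhat hψhat
end
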